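/- arXiv:2311.02264 — 6 statements merged into one kernel-verified Lean document; each statement's English description precedes it below -/
import Mathlib

section
/- Let R be a Ver₄⁺-algebra. Then every element of the kernel of D is central in R. In particular, for every a ∈ R the elements D(a) and a² are central. -/
theorem stmt1 {R : Type*} [Ring R] (D : R → R)
    (hchar : ∀ a : R, a + a = 0)
    (hadd : ∀ a b : R, D (a + b) = D a + D b)
    (hDD : ∀ a : R, D (D a) = 0)
    (hmul : ∀ a b : R, D (a * b) = D a * b + a * D b)
    (hcom : ∀ a b : R, a * b + b * a = D a * D b) :
    (∀ a : R, D a = 0 → ∀ b : R, a * b = b * a) ∧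
    (∀ a b : R, D a * b = b * D a) ∧
    (∀ a b : R, a ^ 2 * b = b * a ^ 2) := by
  have eq_of_add : ∀ x y : R, x + y = 0 → x = y := by
    intro x y h
    have := congrArg (· + y) h
    simpa [add_assoc, hchar y] using this
  have hker : ∀ a : R, D a = 0 → ∀ b : R, a * b = b * a := by
    intro a ha b
    apply eq_of_add
    rw [hcom, ha, zero_mul]
  refine ⟨hker, fun a b => hker _ (hDD a) b, fun a b => ?_⟩
  apply hker
  have h1 : a * D a = D a * a := (hker _ (hDD a) a).symm
  rw [sq, hmul, h1, hchar]
end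

section
/- Let R be a Ver₄⁺-algebra and a, b, c ∈ R. If b·a + c·D(a) = 1, then (b·a·b + D(a)·D(b)·D(c))·a = 1; in particular a has a left inverse. -/
theorem stmt2 {R : Type*} [Ring R] (D : R → R)
    (hchar : ∀ a : R, a + a = 0)
    (hadd : ∀ a b : R, D (a + b) = D a + D b)
    (hDD : ∀ a : R, D (D a) = 0)
    (hmul : ∀ a b : R, D (a * b) = D a * b + a * D b)
    (hcom : ∀ a b : R, a * b + b * a = D a * D b) (a b c : R) (h : b * a + c * D a = 1) :
    (b * a * b + D a * D b * D c) * a = 1 ∧ ∃ l : R, l * a = 1 := by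
  have hneg : ∀ x : R, -x = x := fun x => neg_eq_of_add_eq_zero_left (hchar x)
  have heq : ∀ x y : R, x + y = 0 → x = y := by
    intro x y hxy
    have hx : x = -y := eq_neg_of_add_eq_zero_left hxy
    rwa [hneg] at hx
  -- D-images are central
  have hc : ∀ x y : R, x * D y = D y * x := by
    intro x y
    have h1 := hcom x (D y)
    rw [hDD, mul_zero] at h1
    exact heq _ _ h1
  -- D a squares to zero
  have hDa2 : D a * D a = 0 := by
    have h2 := hcom a a
    rw [hchar] at h2
    exact h2.symm
  -- D 1 = 0
  have hD1 : D (1 : R) = 0 := by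
    have h3 := hmul 1 1
    rw [mul_one, mul_one, one_mul, hchar] at h3
    exact h3
  -- apply D to h
  have hDba : D b * a = b * D a + D c * D a := by
    have h4 := congrArg D h
    rw [hD1, hadd, hmul, hmul, hDD, mul_zero, add_zero, add_assoc] at h4
    exact heq _ _ h4
  have hba : b * a = 1 + c * D a := by
    have h5 := eq_sub_of_add_eq h
    rwa [sub_eq_add_neg, hneg] at h5
  have t1 : b * a * b * a = 1 := by
    calc b * a * b * a = (b * a) * (b * a) := by rw [mul_assoc]
      _ = (1 + c * D a) * (1 + c * D a) := by rw [hba]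
      _ = 1 + (c * D a + c * D a) + c * D a * (c * D a) := by noncomm_ring
      _ = 1 + c * (D a * c) * D a := by rw [hchar, add_zero, mul_assoc, mul_assoc, mul_assoc]
      _ = 1 + c * c * (D a * D a) := by rw [← hc c a, mul_assoc, mul_assoc, mul_assoc]
      _ = 1 := by rw [hDa2, mul_zero, add_zero]
  have t2 : D a * D b * D c * a = 0 := by
    calc D a * D b * D c * a = D a * ((D b * a) * D c) := by
          rw [mul_assoc, mul_assoc, ← hc a c]; noncomm_ring
      _ = D a * ((b * D a + D c * D a) * D c) := by rw [hDba]
      _ = D a * b * (D a * D c) + D a * D c * (D a * D c) := by noncomm_ring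
      _ = b * D a * (D a * D c) + D c * D a * (D a * D c) := by rw [hc b a, hc (D c) a]
      _ = b * (D a * D a) * D c + D c * (D a * D a) * D c := by
          simp [mul_assoc]
      _ = 0 := by simp [hDa2]
  have key : (b * a * b + D a * D b * D c) * a = 1 := by
    rw [add_mul, t1, t2, add_zero]
  exact ⟨key, ⟨_, key⟩⟩
end

section
/- Let R be a Ver₄⁺-algebra. If a ∈ R has a left inverse, then a is a unit. (Hint: if ba = 1, then ab = 1 + D(a)D(b) and (D(a)D(b))² = 0, so ab is a unit.) -/
theorem stmt3 {R : Type*} [Ring R] (D : R → R)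
    (hchar : ∀ a : R, a + a = 0)
    (hadd : ∀ a b : R, D (a + b) = D a + D b)
    (hDD : ∀ a : R, D (D a) = 0)
    (hmul : ∀ a b : R, D (a * b) = D a * b + a * D b)
    (hcom : ∀ a b : R, a * b + b * a = D a * D b) (a : R) (h : ∃ b : R, b * a = 1) : IsUnit a := by
  obtain ⟨b, hb⟩ := h
  -- a*b = 1 + D a * D b
  have hab : a * b = 1 + D a * D b := by
    have h1 := hcom a b
    rw [hb] at h1
    have : a * b + 1 + 1 = D a * D b + 1 := by rw [h1]
    rwa [add_assoc, hchar, add_zero, add_comm (D a * D b) 1] at this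
  -- D a * D a = 0
  have hDa2 : D a * D a = 0 := by
    have := hcom a a
    rw [hchar] at this
    exact this.symm
  -- D a and D b commute
  have hcomm : D b * D a = D a * D b := by
    have h2 := hcom (D a) (D b)
    rw [hDD, zero_mul] at h2
    have : D a * D b + (D a * D b + D b * D a) = D a * D b + 0 := by rw [h2]
    rwa [← add_assoc, hchar, zero_add, add_zero] at this
  have hsq : D a * D b * (D a * D b) = 0 := by
    calc D a * D b * (D a * D b) = D a * (D b * D a) * D b := by noncomm_ring
    _ = D a * (D a * D b) * D b := by rw [hcomm]
    _ = D a * D a * (D b * D b) := by noncomm_ring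
    _ = 0 := by rw [hDa2, zero_mul]
  have huu : (a * b) * (a * b) = 1 := by
    rw [hab]
    have : (1 + D a * D b) * (1 + D a * D b)
        = 1 + (D a * D b + D a * D b) + D a * D b * (D a * D b) := by noncomm_ring
    rw [this, hchar, hsq, add_zero, add_zero]
  refine ⟨⟨a, b * (a * b), ?_, ?_⟩, rfl⟩
  · calc a * (b * (a * b)) = (a * b) * (a * b) := by noncomm_ring
    _ = 1 := huu
  · calc (b * (a * b)) * a = (b * a) * (b * a) := by noncomm_ring
    _ = 1 := by rw [hb, one_mul]
end

section
/- Let R be a Ver₄⁺-algebra. Define δ : Rˣ → R by δ(a) = a⁻¹·D(a). Then for all units a, b one has δ(ab) = δ(a) + δ(b); that is, δ is a group homomorphism from the unit group of R to the additive group of R. -/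
theorem stmt5 {R : Type*} [Ring R] (D : R → R)
    (hchar : ∀ a : R, a + a = 0)
    (hadd : ∀ a b : R, D (a + b) = D a + D b)
    (hDD : ∀ a : R, D (D a) = 0)
    (hmul : ∀ a b : R, D (a * b) = D a * b + a * D b)
    (hcom : ∀ a b : R, a * b + b * a = D a * D b) (a b : Rˣ) :
    (↑(a * b)⁻¹ : R) * D (↑(a * b) : R) =
      (↑a⁻¹ : R) * D (↑a : R) + (↑b⁻¹ : R) * D (↑b : R) := by
  have hcancel : ∀ u v : R, u + v = 0 → u = v := by
    intro u v h
    have h2 := hchar v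
    rw [← h2] at h
    exact add_right_cancel h
  have hDainv : D (↑a⁻¹ : R) * D (↑a : R) = 0 := by
    have h := hcom (↑a⁻¹ : R) (↑a : R)
    rw [Units.inv_mul, Units.mul_inv, hchar 1] at h
    exact h.symm
  have hDdelta : D ((↑a⁻¹ : R) * D (↑a : R)) = 0 := by
    rw [hmul, hDD, mul_zero, add_zero, hDainv]
  have hcentral : ((↑a⁻¹ : R) * D (↑a : R)) * (↑b : R)
      = (↑b : R) * ((↑a⁻¹ : R) * D (↑a : R)) := by
    apply hcancel
    rw [hcom, hDdelta, zero_mul]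
  rw [Units.val_mul, hmul, mul_inv_rev, Units.val_mul]
  have h1 : (↑b⁻¹ * ↑a⁻¹ : R) * (D ↑a * ↑b + ↑a * D ↑b)
      = ↑b⁻¹ * ((↑a⁻¹ * D (↑a : R)) * ↑b) + (↑b⁻¹ * (↑a⁻¹ * ↑a)) * D ↑b := by
    noncomm_ring
  rw [h1, hcentral, ← mul_assoc, Units.inv_mul, Units.inv_mul, mul_one, one_mul]
end

section
/- Let R be a Ver₄⁺-algebra, let a ∈ R satisfy D(a) = a², and let x ∈ R be a unit. Then b := a + x⁻¹·D(x)·(1 + D(a)) also satisfies D(b) = b². -/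
theorem stmt8 {R : Type*} [Ring R] (D : R → R)
    (hchar : ∀ a : R, a + a = 0)
    (hadd : ∀ a b : R, D (a + b) = D a + D b)
    (hDD : ∀ a : R, D (D a) = 0)
    (hmul : ∀ a b : R, D (a * b) = D a * b + a * D b)
    (hcom : ∀ a b : R, a * b + b * a = D a * D b) (a : R) (ha : D a = a ^ 2) (x : Rˣ) :
    D (a + (↑x⁻¹ : R) * D (↑x : R) * (1 + D a)) =
      (a + (↑x⁻¹ : R) * D (↑x : R) * (1 + D a)) ^ 2 := by
  have two : ∀ p q : R, p + q = 0 → p = q := by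
    intro p q h
    calc p = p + (q + q) := by rw [hchar, add_zero]
    _ = (p + q) + q := by rw [add_assoc]
    _ = q := by rw [h, zero_add]
  have cen : ∀ c : R, D c = 0 → ∀ b : R, c * b = b * c := by
    intro c hc b
    apply two
    rw [hcom, hc, zero_mul]
  have sq0 : ∀ c : R, D c * D c = 0 := by
    intro c
    rw [← hcom, hchar]
  have h1 : D (1 : R) = 0 := by
    have h := hmul 1 1
    rw [mul_one, one_mul, mul_one] at h
    rw [h, hchar]
  have hinv : D (↑x⁻¹ : R) * ↑x = (↑x⁻¹ : R) * D ↑x := by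
    apply two
    have h := hmul (↑x⁻¹ : R) ↑x
    rw [Units.inv_mul, h1] at h
    exact h.symm
  have hinv2 : D (↑x⁻¹ : R) = (↑x⁻¹ : R) * D ↑x * ↑x⁻¹ := by
    calc D (↑x⁻¹ : R) = D (↑x⁻¹ : R) * (↑x * ↑x⁻¹) := by rw [Units.mul_inv, mul_one]
    _ = (D (↑x⁻¹ : R) * ↑x) * ↑x⁻¹ := by rw [mul_assoc]
    _ = (↑x⁻¹ : R) * D ↑x * ↑x⁻¹ := by rw [hinv]
  obtain ⟨u, hu⟩ : ∃ u : R, (↑x⁻¹ : R) * D (↑x : R) = u := ⟨_, rfl⟩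
  have hDu : D u = u * u := by
    rw [← hu, hmul, hDD, mul_zero, add_zero, hinv2, mul_assoc]
  obtain ⟨e, he0⟩ : ∃ e : R, (1 : R) + D a = e := ⟨_, rfl⟩
  rw [hu, he0]
  have hDe : D e = 0 := by rw [← he0, hadd, h1, hDD, add_zero]
  have he : ∀ b : R, e * b = b * e := cen e hDe
  have hDa : ∀ b : R, D a * b = b * D a := cen (D a) (hDD a)
  have hee : e * e = 1 := by
    calc e * e = 1 + (D a + D a) + D a * D a := by rw [← he0]; noncomm_ring
    _ = 1 := by rw [hchar, sq0, add_zero, add_zero]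
  have hlhs : D (a + u * e) = D a + u * u * e := by
    rw [hadd, hmul, hDu, hDe, mul_zero, add_zero]
  have hsum : a * (u * e) + u * e * a = D a * (u * u) * e := by
    calc a * (u * e) + u * e * a
        = a * (u * e) + u * (e * a) := by rw [mul_assoc]
    _ = a * u * e + u * a * e := by rw [he a, ← mul_assoc, ← mul_assoc]
    _ = (a * u + u * a) * e := by rw [add_mul]
    _ = (D a * D u) * e := by rw [hcom]
    _ = D a * (u * u) * e := by rw [hDu]
  have hcc : (u * e) * (u * e) = u * u := by
    calc (u * e) * (u * e) = u * (e * u * e) := by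
          rw [mul_assoc u e (u * e), ← mul_assoc e u e]
    _ = u * (u * e * e) := by rw [he u]
    _ = u * (u * (e * e)) := by rw [mul_assoc u e e]
    _ = u * u := by rw [hee, mul_one]
  have h0 : D a * (u * u) * D a = 0 := by
    calc D a * (u * u) * D a = D a * ((u * u) * D a) := mul_assoc _ _ _
    _ = D a * (D a * (u * u)) := by rw [← hDa (u * u)]
    _ = (D a * D a) * (u * u) := (mul_assoc _ _ _).symm
    _ = 0 := by rw [sq0, zero_mul]
  have hkey : u * u * e = D a * (u * u) * e + u * u := by
    calc u * u * e = u * u * 1 + u * u * D a := by rw [← he0, mul_add]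
    _ = u * u + D a * (u * u) := by rw [mul_one, ← hDa (u * u)]
    _ = (D a * (u * u)) * 1 + (D a * (u * u)) * D a + u * u := by
        rw [mul_one, h0, add_zero, add_comm]
    _ = D a * (u * u) * e + u * u := by rw [← he0, mul_add]
  have haa : a * a = D a := by rw [ha, pow_two]
  have expand : (a + u * e) * (a + u * e)
      = a * a + a * (u * e) + (u * e * a + (u * e) * (u * e)) := by noncomm_ring
  rw [hlhs, pow_two, expand, hcc, hkey, haa, ← hsum]
  abel
end

section
/- Let R be a Ver₄⁺-algebra. For all a, b ∈ R one has D(a)·D(b) = D(b)·D(a) and (D(a)·D(b))² = 0. Consequently ab + ba is central and squares to zero for all a, b. -/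
theorem stmt9 {R : Type*} [Ring R] (D : R → R)
    (hchar : ∀ a : R, a + a = 0)
    (hadd : ∀ a b : R, D (a + b) = D a + D b)
    (hDD : ∀ a : R, D (D a) = 0)
    (hmul : ∀ a b : R, D (a * b) = D a * b + a * D b)
    (hcom : ∀ a b : R, a * b + b * a = D a * D b) :
    ∀ a b : R,
      D a * D b = D b * D a ∧
      (D a * D b) ^ 2 = 0 ∧
      (∀ c : R, (a * b + b * a) * c = c * (a * b + b * a)) ∧
      (a * b + b * a) ^ 2 = 0 := by
  have heq : ∀ x y : R, x + y = 0 → x = y := by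
    intro x y h
    have := congrArg (· + y) h
    simpa [add_assoc, hchar y] using this
  have hsq : ∀ a : R, D a * D a = 0 := by
    intro a
    have := hcom a a
    rw [hchar (a * a)] at this
    exact this.symm
  have hcomm : ∀ a b : R, D a * D b = D b * D a := by
    intro a b
    have h := hcom (D a) (D b)
    rw [hDD a, hDD b, mul_zero] at h
    exact heq _ _ h
  intro a b
  have hsq2 : (D a * D b) ^ 2 = 0 := by
    have : (D a * D b) ^ 2 = D a * (D b * D a) * D b := by rw [sq]; noncomm_ring
    rw [this, ← hcomm a b, ← mul_assoc, hsq a, zero_mul, zero_mul]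
  refine ⟨hcomm a b, hsq2, ?_, ?_⟩
  · intro c
    have h := hcom (D a * D b) c
    rw [hmul, hDD a, zero_mul, hDD b, mul_zero, zero_add, zero_mul] at h
    have := heq _ _ h
    rw [hcom a b, this]
  · rw [hcom a b]; exact hsq2
end
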